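/- arXiv:2203.16725 — 4 statements merged into one kernel-verified Lean document; each statement's English description precedes it below -/
import Mathlib

section
/- Let J : I → ℝ be continuous on an open interval I, and suppose J(t) ≠ 0 for all t in the support of a nonnegative η ∈ C_c^∞(I). Let γ₁, γ₂ : I → ℝ be C¹ with γ₁' − γ₂' = J. Then the bilinear form B(f₁,f₂)(x) = ∫ f₁(x+γ₁(t)) f₂(x+γ₂(t)) η(t) dt satisfies ‖B(f₁,f₂)‖_{L¹(ℝ)} ≤ C ‖f₁‖_{L¹} ‖f₂‖_{L¹} for all nonnegative f₁, f₂ ∈ L¹(ℝ), where C depends only on a lower bound for |J| on supp η and on ‖η‖_∞ and the length of supp η. -/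
open MeasureTheory Set

namespace KenigSteinAux

open ENNReal

-- per-point bound
lemma covA {a b : ℝ} {J : ℝ → ℝ} {g : ℝ → ℝ}
    (hJcont : ContinuousOn J (Ioo a b))
    (hg : Differentiable ℝ g) (hderiv : ∀ t ∈ Ioo a b, deriv g t = J t)
    {t₀ : ℝ} (ht₀ : t₀ ∈ Ioo a b) (hJt₀ : J t₀ ≠ 0) :
    ∃ ε > 0, ∀ h : ℝ → ℝ≥0∞, Measurable h →
      ∫⁻ s in Metric.ball t₀ ε, h (g s) ≤ (ENNReal.ofReal (|J t₀|/2))⁻¹ * ∫⁻ y, h y := by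
  have hJpos : 0 < |J t₀| := abs_pos.mpr hJt₀
  obtain ⟨ε₁, hε₁, hball₁⟩ := Metric.isOpen_iff.mp isOpen_Ioo t₀ ht₀
  have hcJ : ContinuousAt J t₀ := hJcont.continuousAt (isOpen_Ioo.mem_nhds ht₀)
  obtain ⟨δ, hδ, hδJ⟩ := Metric.continuousAt_iff.mp hcJ (|J t₀|/2) (by linarith)
  refine ⟨min ε₁ δ, lt_min hε₁ hδ, ?_⟩
  set U := Metric.ball t₀ (min ε₁ δ) with hU
  have hUsub : U ⊆ Ioo a b := fun s hs =>
    hball₁ (Metric.ball_subset_ball (min_le_left _ _) hs)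
  have hJclose : ∀ s ∈ U, |J s - J t₀| < |J t₀|/2 := by
    intro s hs
    have := hδJ (Metric.ball_subset_ball (min_le_right _ _) hs)
    simpa [Real.dist_eq] using this
  have hJlb : ∀ s ∈ U, |J t₀|/2 ≤ |J s| := by
    intro s hs
    have h1 := hJclose s hs
    have h2 := abs_sub_abs_le_abs_sub (J t₀) (J s)
    rw [abs_sub_comm] at h2
    linarith
  have hderivU : ∀ s ∈ U, deriv g s = J s := fun s hs => hderiv s (hUsub hs)
  -- injectivity
  have hinj : InjOn g U := by
    rcases lt_or_gt_of_ne hJt₀ with hneg | hpos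
    · have : StrictAntiOn g U := by
        apply strictAntiOn_of_deriv_neg (convex_ball _ _) hg.continuous.continuousOn
        intro s hs
        rw [Metric.isOpen_ball.interior_eq] at hs
        rw [hderivU s hs]
        have := hJclose s hs
        have := abs_lt.mp (hJclose s hs)
        rw [abs_of_neg hneg] at this
        linarith [this.2]
      exact this.injOn
    · have : StrictMonoOn g U := by
        apply strictMonoOn_of_deriv_pos (convex_ball _ _) hg.continuous.continuousOn
        intro s hs
        rw [Metric.isOpen_ball.interior_eq] at hs
        have := abs_lt.mp (hJclose s hs)
        rw [abs_of_pos hpos] at this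
        rw [hderivU s hs]
        linarith [this.1]
      exact this.injOn
  intro h hmeas
  have hfd : ∀ s ∈ U, HasFDerivWithinAt g ((1 : ℝ →L[ℝ] ℝ).smulRight (J s)) U s := by
    intro s hs
    have := (hg s).hasDerivAt
    rw [hderivU s hs] at this
    exact this.hasDerivWithinAt.hasFDerivWithinAt
  have key := lintegral_image_eq_lintegral_abs_det_fderiv_mul volume
    measurableSet_ball hfd hinj h
  simp only [ContinuousLinearMap.det_smulRight, ContinuousLinearMap.one_apply, one_mul] at key
  have hc0 : ENNReal.ofReal (|J t₀|/2) ≠ 0 := by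
    positivity
  have hctop : ENNReal.ofReal (|J t₀|/2) ≠ ⊤ := ENNReal.ofReal_ne_top
  have step1 : ENNReal.ofReal (|J t₀|/2) * ∫⁻ s in U, h (g s) ≤ ∫⁻ y, h y := by
    calc ENNReal.ofReal (|J t₀|/2) * ∫⁻ s in U, h (g s)
        = ∫⁻ s in U, ENNReal.ofReal (|J t₀|/2) * h (g s) := by
          exact (lintegral_const_mul'' _ (f := fun s => h (g s))
            ((hmeas.comp hg.continuous.measurable).aemeasurable.restrict)).symm
      _ ≤ ∫⁻ s in U, ENNReal.ofReal |J s| * h (g s) := by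
          apply lintegral_mono_ae
          rw [ae_restrict_iff' measurableSet_ball]
          filter_upwards with s hs
          exact mul_le_mul_left (ENNReal.ofReal_le_ofReal (hJlb s hs)) _
      _ = ∫⁻ y in g '' U, h y := key.symm
      _ ≤ ∫⁻ y, h y := setLIntegral_le_lintegral _ _
  calc ∫⁻ s in U, h (g s)
      = (ENNReal.ofReal (|J t₀|/2))⁻¹ * (ENNReal.ofReal (|J t₀|/2) * ∫⁻ s in U, h (g s)) := by
        rw [← mul_assoc, ENNReal.inv_mul_cancel hc0 hctop, one_mul]
    _ ≤ (ENNReal.ofReal (|J t₀|/2))⁻¹ * ∫⁻ y, h y := mul_le_mul_right step1 _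

lemma covB {a b : ℝ} {J : ℝ → ℝ} {g : ℝ → ℝ} {K : Set ℝ}
    (hK : IsCompact K) (hKsub : K ⊆ Ioo a b)
    (hJcont : ContinuousOn J (Ioo a b))
    (hg : Differentiable ℝ g) (hderiv : ∀ t ∈ Ioo a b, deriv g t = J t)
    (hJne : ∀ t ∈ K, J t ≠ 0) :
    ∃ C : ℝ≥0∞, C ≠ ⊤ ∧ ∀ h : ℝ → ℝ≥0∞, Measurable h →
      ∫⁻ t in K, h (g t) ≤ C * ∫⁻ y, h y := by
  have hpt : ∀ t : ℝ, t ∈ K → ∃ ε > 0, ∀ h : ℝ → ℝ≥0∞, Measurable h →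
      ∫⁻ s in Metric.ball t ε, h (g s) ≤ (ENNReal.ofReal (|J t|/2))⁻¹ * ∫⁻ y, h y :=
    fun t ht => covA hJcont hg hderiv (hKsub ht) (hJne t ht)
  choose! ε hεpos hbound using hpt
  obtain ⟨T, hTK, hTcov⟩ := hK.elim_nhds_subcover (fun t => Metric.ball t (ε t))
    (fun t ht => Metric.ball_mem_nhds _ (hεpos t ht))
  refine ⟨∑ t ∈ T, (ENNReal.ofReal (|J t|/2))⁻¹, ?_, ?_⟩
  · rw [← lt_top_iff_ne_top]
    apply ENNReal.sum_lt_top.mpr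
    intro t ht
    rw [lt_top_iff_ne_top, ENNReal.inv_ne_top]
    have : 0 < |J t| := abs_pos.mpr (hJne t (hTK t ht))
    positivity
  · intro h hmeas
    calc ∫⁻ t in K, h (g t)
        ≤ ∫⁻ t in ⋃ x ∈ T, Metric.ball x (ε x), h (g t) := lintegral_mono_set hTcov
      _ ≤ ∑ x ∈ T, ∫⁻ t in Metric.ball x (ε x), h (g t) := by
          rw [← Finset.set_biUnion_coe, Set.biUnion_eq_iUnion]
          refine (lintegral_iUnion_le _ _).trans_eq ?_
          rw [← Finset.tsum_subtype T fun x => ∫⁻ t in Metric.ball x (ε x), h (g t)]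
          rfl
      _ ≤ ∑ x ∈ T, (ENNReal.ofReal (|J x|/2))⁻¹ * ∫⁻ y, h y :=
          Finset.sum_le_sum fun x hx => hbound x (hTK x hx) h hmeas
      _ = (∑ t ∈ T, (ENNReal.ofReal (|J t|/2))⁻¹) * ∫⁻ y, h y := (Finset.sum_mul _ _ _).symm

lemma shear_null {γ : ℝ → ℝ} (hγ : Continuous γ) {N : Set ℝ} (hN : volume N = 0) :
    (volume.prod volume) {p : ℝ × ℝ | p.1 + γ p.2 ∈ N} = 0 := by
  obtain ⟨N', hsub, hN'm, hN'0⟩ := exists_measurable_superset_of_null hN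
  have hm : Measurable fun p : ℝ × ℝ => p.1 + γ p.2 :=
    measurable_fst.add (hγ.measurable.comp measurable_snd)
  refine measure_mono_null (fun p hp => hsub hp) ?_
  show (volume.prod volume) ((fun p : ℝ × ℝ => p.1 + γ p.2) ⁻¹' N') = 0
  rw [Measure.prod_apply_symm (hm hN'm)]
  have : ∀ y : ℝ, volume ((fun x : ℝ => (x, y)) ⁻¹' ((fun p : ℝ × ℝ => p.1 + γ p.2) ⁻¹' N')) = 0 := by
    intro y
    have : ((fun x : ℝ => (x, y)) ⁻¹' ((fun p : ℝ × ℝ => p.1 + γ p.2) ⁻¹' N'))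
        = (fun x : ℝ => x + γ y) ⁻¹' N' := rfl
    rw [this, measure_preimage_add_right]
    exact hN'0
  simp only [this, lintegral_zero]

end KenigSteinAux

open KenigSteinAux ENNReal

/-- Kenig–Stein type `L¹×L¹→L¹` bound for the bilinear form when the
Jacobian `J = γ₁' - γ₂'` does not vanish on the support of the cutoff `η`. -/
theorem stmt0 (a b : ℝ) (J γ₁ γ₂ η : ℝ → ℝ)
    (hJcont : ContinuousOn J (Ioo a b))
    (hη : ContDiff ℝ (⊤ : ℕ∞) η) (hηc : HasCompactSupport η)
    (hηsupp : tsupport η ⊆ Ioo a b) (hηnn : ∀ t, 0 ≤ η t)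
    (hγ₁ : ContDiff ℝ 1 γ₁) (hγ₂ : ContDiff ℝ 1 γ₂)
    (hJ : ∀ t ∈ Ioo a b, deriv γ₁ t - deriv γ₂ t = J t)
    (hJne : ∀ t ∈ tsupport η, J t ≠ 0) :
    ∃ C : ℝ, ∀ f₁ f₂ : ℝ → ℝ, Integrable f₁ → Integrable f₂ →
      (∀ x, 0 ≤ f₁ x) → (∀ x, 0 ≤ f₂ x) →
      ∫ x : ℝ, ∫ t : ℝ, f₁ (x + γ₁ t) * f₂ (x + γ₂ t) * η t
        ≤ C * (∫ x, f₁ x) * (∫ x, f₂ x) := by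
  obtain ⟨M, hM⟩ := hη.continuous.bounded_above_of_compact_support hηc
  have hM' : ∀ t, η t ≤ M := fun t => (le_abs_self _).trans (by simpa [Real.norm_eq_abs] using hM t)
  have hM0 : 0 ≤ M := le_trans (hηnn 0) (hM' 0)
  set g : ℝ → ℝ := fun t => γ₁ t - γ₂ t with hgdef
  have hd₁ : Differentiable ℝ γ₁ := hγ₁.differentiable one_ne_zero
  have hd₂ : Differentiable ℝ γ₂ := hγ₂.differentiable one_ne_zero
  have hgdiff : Differentiable ℝ g := hd₁.sub hd₂
  have hgderiv : ∀ t ∈ Ioo a b, deriv g t = J t := by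
    intro t ht
    rw [hgdef]
    rw [deriv_fun_sub (hd₁.differentiableAt) (hd₂.differentiableAt)]
    exact hJ t ht
  obtain ⟨C₀, hC₀top, hC₀⟩ := covB hηc hηsupp hJcont hgdiff hgderiv hJne
  refine ⟨M * C₀.toReal, ?_⟩
  intro f₁ f₂ hf₁ hf₂ h1nn h2nn
  have hI1 : 0 ≤ ∫ x, f₁ x := integral_nonneg h1nn
  have hI2 : 0 ≤ ∫ x, f₂ x := integral_nonneg h2nn
  have hRHS : 0 ≤ M * C₀.toReal * (∫ x, f₁ x) * ∫ x, f₂ x := by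
    have := ENNReal.toReal_nonneg (a := C₀)
    positivity
  set G : ℝ → ℝ := fun x => ∫ t, f₁ (x + γ₁ t) * f₂ (x + γ₂ t) * η t with hGdef
  show ∫ x, G x ≤ _
  by_cases hGint : Integrable G
  swap
  · rw [integral_undef hGint]; exact hRHS
  -- measurable representatives
  obtain ⟨g₁, hg₁m, hg₁⟩ : ∃ g₁ : ℝ → ℝ, Measurable g₁ ∧ f₁ =ᵐ[volume] g₁ :=
    ⟨hf₁.aemeasurable.mk f₁, hf₁.aemeasurable.measurable_mk, hf₁.aemeasurable.ae_eq_mk⟩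
  obtain ⟨g₂, hg₂m, hg₂⟩ : ∃ g₂ : ℝ → ℝ, Measurable g₂ ∧ f₂ =ᵐ[volume] g₂ :=
    ⟨hf₂.aemeasurable.mk f₂, hf₂.aemeasurable.measurable_mk, hf₂.aemeasurable.ae_eq_mk⟩
  set φ₁ : ℝ → ℝ≥0∞ := fun y => ENNReal.ofReal (g₁ y) with hφ₁def
  set φ₂ : ℝ → ℝ≥0∞ := fun y => ENNReal.ofReal (g₂ y) with hφ₂def
  have hφ₁m : Measurable φ₁ := ENNReal.measurable_ofReal.comp hg₁m
  have hφ₂m : Measurable φ₂ := ENNReal.measurable_ofReal.comp hg₂m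
  have hint1 : ∫⁻ y, φ₁ y = ENNReal.ofReal (∫ x, f₁ x) := by
    rw [ofReal_integral_eq_lintegral_ofReal hf₁ (.of_forall h1nn)]
    exact lintegral_congr_ae (hg₁.mono fun y hy => by simp only [hy, hφ₁def])
  have hint2 : ∫⁻ y, φ₂ y = ENNReal.ofReal (∫ x, f₂ x) := by
    rw [ofReal_integral_eq_lintegral_ofReal hf₂ (.of_forall h2nn)]
    exact lintegral_congr_ae (hg₂.mono fun y hy => by simp only [hy, hφ₂def])
  -- a.e. pointwise identification with measurable representatives
  have e1 : ∀ᵐ p ∂(volume.prod volume : Measure (ℝ × ℝ)),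
      f₁ (p.1 + γ₁ p.2) = g₁ (p.1 + γ₁ p.2) := by
    rw [ae_iff]
    exact measure_mono_null (fun p hp => hp) (shear_null hγ₁.continuous (ae_iff.mp hg₁))
  have e2 : ∀ᵐ p ∂(volume.prod volume : Measure (ℝ × ℝ)),
      f₂ (p.1 + γ₂ p.2) = g₂ (p.1 + γ₂ p.2) := by
    rw [ae_iff]
    exact measure_mono_null (fun p hp => hp) (shear_null hγ₂.continuous (ae_iff.mp hg₂))
  have hae : ∀ᵐ x : ℝ ∂volume, ∀ᵐ t : ℝ ∂volume,
      ENNReal.ofReal (f₁ (x + γ₁ t) * f₂ (x + γ₂ t) * η t)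
        = φ₁ (x + γ₁ t) * φ₂ (x + γ₂ t) * ENNReal.ofReal (η t) := by
    filter_upwards [Measure.ae_ae_of_ae_prod e1, Measure.ae_ae_of_ae_prod e2] with x hx1 hx2
    filter_upwards [hx1, hx2] with t ht1 ht2
    rw [ENNReal.ofReal_mul (mul_nonneg (h1nn _) (h2nn _)), ENNReal.ofReal_mul (h1nn _),
      ht1, ht2]
  -- pass to lintegrals
  have hGnn : 0 ≤ᵐ[volume] G := .of_forall fun x =>
    integral_nonneg fun t => mul_nonneg (mul_nonneg (h1nn _) (h2nn _)) (hηnn t)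
  rw [integral_eq_lintegral_of_nonneg_ae hGnn hGint.1]
  apply ENNReal.toReal_le_of_le_ofReal hRHS
  have hΦm : Measurable fun z : ℝ × ℝ =>
      φ₁ (z.1 + γ₁ z.2) * φ₂ (z.1 + γ₂ z.2) * ENNReal.ofReal (η z.2) :=
    ((hφ₁m.comp (measurable_fst.add (hγ₁.continuous.measurable.comp measurable_snd))).mul
      (hφ₂m.comp (measurable_fst.add (hγ₂.continuous.measurable.comp measurable_snd)))).mul
      (ENNReal.measurable_ofReal.comp (hη.continuous.measurable.comp measurable_snd))
  have hΨm : Measurable fun z : ℝ × ℝ =>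
      ENNReal.ofReal (η z.1) * (φ₁ (z.2 + g z.1) * φ₂ z.2) :=
    (ENNReal.measurable_ofReal.comp (hη.continuous.measurable.comp measurable_fst)).mul
      ((hφ₁m.comp (measurable_snd.add (hgdiff.continuous.measurable.comp measurable_fst))).mul
        (hφ₂m.comp measurable_snd))
  have inner_bound : ∀ x : ℝ,
      ∫⁻ t, ENNReal.ofReal (η t) * φ₁ (x + g t)
        ≤ ENNReal.ofReal M * (C₀ * ∫⁻ y, φ₁ y) := by
    intro x
    have hKmeas : MeasurableSet (tsupport η) := (isClosed_tsupport η).measurableSet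
    have hrestr : ∫⁻ t, ENNReal.ofReal (η t) * φ₁ (x + g t)
        = ∫⁻ t in tsupport η, ENNReal.ofReal (η t) * φ₁ (x + g t) := by
      rw [← lintegral_indicator hKmeas]
      refine lintegral_congr fun t => ?_
      by_cases ht : t ∈ tsupport η
      · rw [indicator_of_mem ht]
      · rw [indicator_of_notMem ht, image_eq_zero_of_notMem_tsupport ht,
          ENNReal.ofReal_zero, zero_mul]
    rw [hrestr]
    calc ∫⁻ t in tsupport η, ENNReal.ofReal (η t) * φ₁ (x + g t)
        ≤ ∫⁻ t in tsupport η, ENNReal.ofReal M * φ₁ (x + g t) :=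
          lintegral_mono fun t => mul_le_mul_left (ENNReal.ofReal_le_ofReal (hM' t)) _
      _ = ENNReal.ofReal M * ∫⁻ t in tsupport η, φ₁ (x + g t) :=
          lintegral_const_mul' _ _ ENNReal.ofReal_ne_top
      _ ≤ ENNReal.ofReal M * (C₀ * ∫⁻ y, φ₁ (x + y)) :=
          mul_le_mul_right (hC₀ (fun y => φ₁ (x + y)) (hφ₁m.comp (measurable_const_add x))) _
      _ = ENNReal.ofReal M * (C₀ * ∫⁻ y, φ₁ y) := by
          congr 2
          exact (measurePreserving_add_left volume x).lintegral_comp hφ₁m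
  calc ∫⁻ x, ENNReal.ofReal (G x)
      ≤ ∫⁻ x, ∫⁻ t, ENNReal.ofReal (f₁ (x + γ₁ t) * f₂ (x + γ₂ t) * η t) := by
        refine lintegral_mono fun x => ?_
        by_cases hi : Integrable fun t => f₁ (x + γ₁ t) * f₂ (x + γ₂ t) * η t
        · rw [hGdef]
          exact le_of_eq (ofReal_integral_eq_lintegral_ofReal hi
            (.of_forall fun t => mul_nonneg (mul_nonneg (h1nn _) (h2nn _)) (hηnn t)))
        · rw [hGdef]
          simp only [integral_undef hi, ENNReal.ofReal_zero]
          exact zero_le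
    _ = ∫⁻ x, ∫⁻ t, φ₁ (x + γ₁ t) * φ₂ (x + γ₂ t) * ENNReal.ofReal (η t) :=
        lintegral_congr_ae (hae.mono fun x hx => lintegral_congr_ae hx)
    _ = ∫⁻ t, ∫⁻ x, φ₁ (x + γ₁ t) * φ₂ (x + γ₂ t) * ENNReal.ofReal (η t) :=
        lintegral_lintegral_swap hΦm.aemeasurable
    _ = ∫⁻ t, ∫⁻ x, ENNReal.ofReal (η t) * (φ₁ (x + g t) * φ₂ x) := by
        refine lintegral_congr fun t => ?_
        calc ∫⁻ x, φ₁ (x + γ₁ t) * φ₂ (x + γ₂ t) * ENNReal.ofReal (η t)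
            = ∫⁻ x, ENNReal.ofReal (η t) * (φ₁ (x + γ₁ t) * φ₂ (x + γ₂ t)) :=
              lintegral_congr fun x => by ring
          _ = ENNReal.ofReal (η t) * ∫⁻ x, φ₁ (x + γ₁ t) * φ₂ (x + γ₂ t) :=
              lintegral_const_mul' _ _ ENNReal.ofReal_ne_top
          _ = ENNReal.ofReal (η t) * ∫⁻ x, φ₁ (x + g t) * φ₂ x := by
              congr 1
              have := (measurePreserving_add_right volume (γ₂ t)).lintegral_comp
                (f := fun y => φ₁ (y + g t) * φ₂ y)
                ((hφ₁m.comp (measurable_add_const _)).mul hφ₂m)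
              rw [← this]
              refine lintegral_congr fun x => ?_
              have harg : x + γ₂ t + g t = x + γ₁ t := by rw [hgdef]; ring
              show φ₁ (x + γ₁ t) * φ₂ (x + γ₂ t) = φ₁ (x + γ₂ t + g t) * φ₂ (x + γ₂ t)
              rw [harg]
          _ = ∫⁻ x, ENNReal.ofReal (η t) * (φ₁ (x + g t) * φ₂ x) :=
              (lintegral_const_mul' _ _ ENNReal.ofReal_ne_top).symm
    _ = ∫⁻ x, ∫⁻ t, ENNReal.ofReal (η t) * (φ₁ (x + g t) * φ₂ x) :=
        lintegral_lintegral_swap hΨm.aemeasurable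
    _ = ∫⁻ x, φ₂ x * ∫⁻ t, ENNReal.ofReal (η t) * φ₁ (x + g t) := by
        refine lintegral_congr fun x => ?_
        rw [← lintegral_const_mul' (φ₂ x) _ ENNReal.ofReal_ne_top]
        · refine lintegral_congr fun t => ?_
          ring
    _ ≤ ∫⁻ x, φ₂ x * (ENNReal.ofReal M * (C₀ * ∫⁻ y, φ₁ y)) :=
        lintegral_mono fun x => mul_le_mul_right (inner_bound x) _
    _ = (∫⁻ x, φ₂ x) * (ENNReal.ofReal M * (C₀ * ∫⁻ y, φ₁ y)) :=
        lintegral_mul_const'' _ hφ₂m.aemeasurable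
    _ ≤ ENNReal.ofReal (M * C₀.toReal * (∫ x, f₁ x) * ∫ x, f₂ x) := by
        rw [hint1, hint2, ENNReal.ofReal_mul (by positivity), ENNReal.ofReal_mul (by positivity),
          ENNReal.ofReal_mul hM0, ENNReal.ofReal_toReal hC₀top]
        exact le_of_eq (by ring)
end

section
/- For d, N ≥ 1 there exist positive constants σ and C such that: for every polynomial R on ℝ^d of degree at most N satisfying Σ_{|β|≤N} |∂^β R(0)| ≥ 1, and every ε > 0, the Lebesgue measure of {x in the closed unit cube Q ⊂ ℝ^d : |R(x)| ≤ ε} is at most C ε^σ. -/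
/-!
The jet of a polynomial of degree at most `N` at the origin depends linearly on its finitely many
coefficients, so a normalized jet forces some coefficient to have size at least a fixed `κ > 0`.

In one variable, if `{t ∈ [0, 1] : |p t| ≤ ε}` has measure `m`, it contains `N + 1` points at
mutual distance `≥ m / (2N + 2)`, because `N` intervals of that radius cannot cover it. Lagrange
interpolation at these points bounds every coefficient of `p` by `≲ ε m⁻ᴺ`, hence
`m ≲ (ε / κ) ^ (1 / (N + 1))`.

In `d + 1` variables write `R = ∑ⱼ x₀ʲ Rⱼ(y)`, where `Rⱼ` inherits the large coefficient. By Fubini,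
the sublevel set is controlled by the `y` with `|Rⱼ(y)| ≤ δ`, a set of measure `≲ (δ / κ) ^ σ` by
induction, and by the fibres over the other `y`, each of measure `≲ (ε / δ) ^ (1 / (N + 1))` by the
one-variable case. The choice `δ = √(εκ)` balances the two.
-/

open MeasureTheory MvPolynomial Set
open scoped ENNReal

theorem MvPolynomial.contDiff_eval {ι : Type*} [Fintype ι] (R : MvPolynomial ι ℝ) {n : WithTop ℕ∞} :
    ContDiff ℝ n fun x : ι → ℝ => eval x R :=
  (AnalyticOnNhd.eval_mvPolynomial R).contDiff

theorem MvPolynomial.norm_iteratedFDeriv_eval_le {ι : Type*} [Fintype ι] (R : MvPolynomial ι ℝ)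
    {S : Finset (ι →₀ ℕ)} (hS : R.support ⊆ S) {c : ℝ} (hc : ∀ s, |R.coeff s| ≤ c) (k : ℕ)
    (x : ι → ℝ) :
    ‖iteratedFDeriv ℝ k (fun x => eval x R) x‖ ≤
      c * ∑ s ∈ S, ‖iteratedFDeriv ℝ k (fun x => eval x (monomial s 1)) x‖ := by
  have hR : (fun x => eval x R) = fun x => ∑ s ∈ S, R.coeff s • eval x (monomial s (1 : ℝ)) := by
    funext x
    conv_lhs => rw [← support_sum_monomial_coeff R,
      Finset.sum_subset hS fun s _ hs => by rw [notMem_support_iff.mp hs, monomial_zero]]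
    simp [eval_monomial]
  rw [hR, iteratedFDeriv_fun_sum_apply fun s _ => ((contDiff_eval _).const_smul _).contDiffAt,
    Finset.mul_sum]
  refine (norm_sum_le _ _).trans (Finset.sum_le_sum fun s _ => ?_)
  rw [iteratedFDeriv_const_smul_apply' (contDiff_eval _).contDiffAt, norm_smul, Real.norm_eq_abs]
  exact mul_le_mul_of_nonneg_right (hc s) (norm_nonneg _)

theorem MvPolynomial.exists_le_abs_coeff_of_one_le_jet (ι : Type*) [Fintype ι] (N : ℕ) :
    ∃ κ : ℝ, 0 < κ ∧ ∀ R : MvPolynomial ι ℝ, R.totalDegree ≤ N →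
      1 ≤ ∑ k ∈ Finset.range (N + 1), ‖iteratedFDeriv ℝ k (fun x : ι → ℝ => eval x R) 0‖ →
      ∃ s, κ ≤ |R.coeff s| := by
  set S := (Finsupp.finite_of_degree_le (σ := ι) N).toFinset
  set K := ∑ k ∈ Finset.range (N + 1),
    ∑ s ∈ S, ‖iteratedFDeriv ℝ k (fun x : ι → ℝ => eval x (monomial s (1 : ℝ))) 0‖
  have hK : 0 ≤ K := by positivity
  refine ⟨(K + 1)⁻¹, by positivity, fun R hR hjet => ?_⟩
  by_contra! hsmall
  have hS : R.support ⊆ S := fun s hs => by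
    simp only [S, Set.Finite.mem_toFinset, Set.mem_ofPred_eq]
    exact (le_totalDegree hs).trans hR
  have hjet_le : ∑ k ∈ Finset.range (N + 1),
      ‖iteratedFDeriv ℝ k (fun x : ι → ℝ => eval x R) 0‖ ≤ (K + 1)⁻¹ * K := by
    rw [Finset.mul_sum]
    exact Finset.sum_le_sum fun k _ =>
      norm_iteratedFDeriv_eval_le R hS (fun s => (hsmall s).le) k 0
  have hK_lt : (K + 1)⁻¹ * K < 1 := by
    rw [inv_mul_lt_iff₀ (by positivity)]; linarith
  linarith

theorem exists_mem_forall_le_abs_sub_of_volume_gt {A : Set ℝ} {γ : ℝ} (s : Finset ℝ)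
    (h : ENNReal.ofReal (2 * γ * s.card) < volume A) : ∃ x ∈ A, ∀ y ∈ s, γ ≤ |x - y| := by
  by_contra! hcov
  have hA : A ⊆ ⋃ y ∈ s, Metric.ball y γ := fun x hx => by
    obtain ⟨y, hy, hxy⟩ := hcov x hx
    exact mem_biUnion hy (by rwa [Metric.mem_ball, Real.dist_eq])
  refine h.not_ge ((measure_mono hA).trans ((measure_biUnion_finset_le s _).trans ?_))
  simp only [Real.volume_ball, Finset.sum_const, nsmul_eq_mul]
  rw [ENNReal.ofReal_mul' (Nat.cast_nonneg _), ENNReal.ofReal_natCast, mul_comm]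

theorem exists_finset_pairwise_le_abs_sub {A : Set ℝ} {γ : ℝ} (hγ : 0 < γ) (n : ℕ)
    (h : ENNReal.ofReal (2 * γ * n) < volume A) :
    ∃ s : Finset ℝ, ↑s ⊆ A ∧ s.card = n + 1 ∧ (s : Set ℝ).Pairwise fun x y => γ ≤ |x - y| := by
  induction n with
  | zero =>
    obtain ⟨x, hx, -⟩ := exists_mem_forall_le_abs_sub_of_volume_gt (γ := γ) ∅ (by simpa using h)
    exact ⟨{x}, by simpa using hx, rfl, by simp⟩
  | succ n ih =>
    obtain ⟨s, hsA, hcard, hsep⟩ :=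
      ih (lt_of_le_of_lt (ENNReal.ofReal_le_ofReal (by gcongr; linarith)) h)
    obtain ⟨x, hxA, hx⟩ := exists_mem_forall_le_abs_sub_of_volume_gt s (by rwa [hcard])
    have hxs : x ∉ s := fun hxs => by simpa [hγ.not_ge] using hx x hxs
    refine ⟨insert x s, by simpa [Set.insert_subset_iff] using ⟨hxA, hsA⟩,
      by rw [Finset.card_insert_of_notMem hxs, hcard], ?_⟩
    rw [Finset.coe_insert, Set.pairwise_insert]
    exact ⟨hsep, fun y hy _ => ⟨hx y hy, abs_sub_comm x y ▸ hx y hy⟩⟩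

theorem volume_sep_Icc_zero_one_le_one {ι : Type*} [Fintype ι] (P : (ι → ℝ) → Prop) :
    volume {x : ι → ℝ | x ∈ Icc 0 1 ∧ P x} ≤ 1 :=
  (measure_mono fun _ hx => hx.1).trans_eq (by simp [Real.volume_Icc_pi])

namespace Polynomial

theorem abs_coeff_X_sub_C_mul_le {p : ℝ[X]} {M : ℝ} (hp : ∀ k, |p.coeff k| ≤ M) (w : ℝ) (k : ℕ) :
    |((X - C w) * p).coeff k| ≤ (1 + |w|) * M := by
  have hXp : |(X * p).coeff k| ≤ M := by
    cases k with
    | zero => simpa using (abs_nonneg _).trans (hp 0)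
    | succ k => simpa only [coeff_X_mul] using hp k
  rw [sub_mul, coeff_sub, coeff_C_mul, add_mul, one_mul]
  refine (abs_sub _ _).trans (add_le_add hXp ?_)
  rw [abs_mul]
  exact mul_le_mul_of_nonneg_left (hp k) (abs_nonneg w)

theorem abs_coeff_prod_X_sub_C_le {ι : Type*} (t : Finset ι) (w : ι → ℝ) (k : ℕ) :
    |(∏ j ∈ t, (X - C (w j))).coeff k| ≤ ∏ j ∈ t, (1 + |w j|) := by
  classical
  induction t using Finset.induction_on generalizing k with
  | empty => rcases k with _ | k <;> simp [coeff_one]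
  | insert j t hj ih =>
    rw [Finset.prod_insert hj, Finset.prod_insert hj]
    exact abs_coeff_X_sub_C_mul_le ih _ k

theorem abs_coeff_lagrangeBasis_le {s : Finset ℝ} (hs : ↑s ⊆ Icc (-1 : ℝ) 1) {γ : ℝ} (hγ : 0 < γ)
    (hsep : (s : Set ℝ).Pairwise fun x y => γ ≤ |x - y|) {x : ℝ} (hx : x ∈ s) (k : ℕ) :
    |(Lagrange.basis s id x).coeff k| ≤ (2 / γ) ^ (s.card - 1) := by
  have hbasis : Lagrange.basis s id x =
      C (∏ y ∈ s.erase x, (x - y)⁻¹) * ∏ y ∈ s.erase x, (X - C y) := by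
    simp only [Lagrange.basis, Lagrange.basisDivisor, id, Finset.prod_mul_distrib, map_prod]
  have hcard : (s.erase x).card = s.card - 1 := Finset.card_erase_of_mem hx
  have hinv : |∏ y ∈ s.erase x, (x - y)⁻¹| ≤ γ⁻¹ ^ (s.card - 1) := by
    rw [Finset.abs_prod, ← hcard, ← Finset.prod_const]
    refine Finset.prod_le_prod (fun _ _ => abs_nonneg _) fun y hy => ?_
    rw [abs_inv]
    exact inv_anti₀ hγ (hsep hx (Finset.mem_of_mem_erase hy) (Finset.ne_of_mem_erase hy).symm)
  have hprod : |(∏ y ∈ s.erase x, (X - C y)).coeff k| ≤ 2 ^ (s.card - 1) := by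
    rw [← hcard, ← Finset.prod_const]
    refine (abs_coeff_prod_X_sub_C_le _ _ k).trans
      (Finset.prod_le_prod (fun _ _ => by positivity) fun y hy => ?_)
    have := hs (Finset.mem_of_mem_erase hy)
    linarith [abs_le.mpr ⟨this.1, this.2⟩]
  calc |(Lagrange.basis s id x).coeff k|
      = |∏ y ∈ s.erase x, (x - y)⁻¹| * |(∏ y ∈ s.erase x, (X - C y)).coeff k| := by
        rw [hbasis, coeff_C_mul, abs_mul]
    _ ≤ γ⁻¹ ^ (s.card - 1) * 2 ^ (s.card - 1) :=
        mul_le_mul hinv hprod (abs_nonneg _) (by positivity)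
    _ = (2 / γ) ^ (s.card - 1) := by rw [div_eq_mul_inv, mul_pow, mul_comm]

theorem abs_coeff_le_of_abs_eval_le {p : ℝ[X]} {N : ℕ} (hp : p.natDegree ≤ N) {s : Finset ℝ}
    (hcard : s.card = N + 1) (hs : ↑s ⊆ Icc (-1 : ℝ) 1) {γ : ℝ} (hγ : 0 < γ)
    (hsep : (s : Set ℝ).Pairwise fun x y => γ ≤ |x - y|) {ε : ℝ} (hε : ∀ x ∈ s, |p.eval x| ≤ ε)
    (k : ℕ) :
    |p.coeff k| ≤ (N + 1) * ε * (2 / γ) ^ N := by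
  have hdeg : p.degree < s.card := by
    rw [hcard]
    exact degree_le_natDegree.trans_lt (by exact_mod_cast Nat.lt_succ_of_le hp)
  rw [Lagrange.eq_interpolate (Set.injOn_id _) hdeg, Lagrange.interpolate_apply, finsetSum_coeff]
  calc |∑ x ∈ s, (C (p.eval (id x)) * Lagrange.basis s id x).coeff k|
      ≤ ∑ x ∈ s, ε * (2 / γ) ^ N := by
        refine (Finset.abs_sum_le_sum_abs _ _).trans (Finset.sum_le_sum fun x hx => ?_)
        rw [coeff_C_mul, abs_mul]
        have := abs_coeff_lagrangeBasis_le hs hγ hsep hx k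
        rw [hcard, Nat.add_sub_cancel] at this
        exact mul_le_mul (hε x hx) this (abs_nonneg _) ((abs_nonneg _).trans (hε x hx))
    _ = (N + 1) * ε * (2 / γ) ^ N := by
        rw [Finset.sum_const, hcard, nsmul_eq_mul]; push_cast; ring

theorem abs_coeff_mul_volume_sublevel_pow_le {p : ℝ[X]} {N : ℕ} (hp : p.natDegree ≤ N) {ε : ℝ}
    (hε : 0 ≤ ε) (k : ℕ) :
    |p.coeff k| * (volume {t | t ∈ Icc (0 : ℝ) 1 ∧ |p.eval t| ≤ ε}).toReal ^ (N + 1) ≤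
      (N + 1) * (4 * (N + 1)) ^ N * ε := by
  set A := {t | t ∈ Icc (0 : ℝ) 1 ∧ |p.eval t| ≤ ε}
  have hA : volume A ≤ 1 := (measure_mono fun _ ht => ht.1).trans_eq (by simp)
  set m := (volume A).toReal
  have hm1 : m ≤ 1 := ENNReal.toReal_le_of_le_ofReal zero_le_one (by simpa using hA)
  rcases (show 0 ≤ m from ENNReal.toReal_nonneg).eq_or_lt with hm0 | hm0
  · rw [← hm0, zero_pow (Nat.succ_ne_zero N), mul_zero]
    positivity
  set γ := m / (2 * (N + 1))
  have hγ : 0 < γ := by positivity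
  have hvol : ENNReal.ofReal (2 * γ * N) < volume A := by
    rw [← ENNReal.ofReal_toReal (hA.trans_lt ENNReal.one_lt_top).ne,
      ENNReal.ofReal_lt_ofReal_iff hm0]
    calc 2 * γ * N = m * (N / (N + 1)) := by simp only [γ]; field_simp
      _ < m * 1 := mul_lt_mul_of_pos_left ((div_lt_one (by positivity)).mpr (by linarith)) hm0
      _ = m := mul_one m
  obtain ⟨s, hsA, hcard, hsep⟩ := exists_finset_pairwise_le_abs_sub hγ N hvol
  have hcoeff := abs_coeff_le_of_abs_eval_le hp hcard
    (fun t ht => ⟨by linarith [(hsA ht).1.1], (hsA ht).1.2⟩) hγ hsep (fun t ht => (hsA ht).2) k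
  calc |p.coeff k| * m ^ (N + 1) ≤ |p.coeff k| * m ^ N :=
        mul_le_mul_of_nonneg_left (pow_le_pow_of_le_one hm0.le hm1 N.le_succ) (abs_nonneg _)
    _ ≤ (N + 1) * ε * (2 / γ) ^ N * m ^ N := by gcongr
    _ = (N + 1) * (4 * (N + 1)) ^ N * ε := by
        have hγm : 2 / γ * m = 4 * (N + 1) := by simp only [γ]; field_simp; ring
        rw [mul_assoc _ ((2 / γ) ^ N), ← mul_pow, hγm]
        ring

theorem volume_sublevel_le {p : ℝ[X]} {N : ℕ} (hp : p.natDegree ≤ N) {κ : ℝ} (hκ : 0 < κ) {k : ℕ}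
    (hk : κ ≤ |p.coeff k|) {ε : ℝ} (hε : 0 ≤ ε) :
    volume {t | t ∈ Icc (0 : ℝ) 1 ∧ |p.eval t| ≤ ε} ≤
      ENNReal.ofReal (((N + 1) * (4 * (N + 1)) ^ N * (ε / κ)) ^ ((N : ℝ) + 1)⁻¹) := by
  set A := {t | t ∈ Icc (0 : ℝ) 1 ∧ |p.eval t| ≤ ε}
  have hpow : (volume A).toReal ^ (N + 1) ≤ (N + 1) * (4 * (N + 1)) ^ N * (ε / κ) := by
    rw [mul_div_assoc', le_div_iff₀ hκ, mul_comm]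
    exact (mul_le_mul_of_nonneg_right hk (by positivity)).trans
      (abs_coeff_mul_volume_sublevel_pow_le hp hε k)
  rw [← ENNReal.ofReal_toReal (measure_ne_top_of_subset (fun _ ht => ht.1) (by simp))]
  refine ENNReal.ofReal_le_ofReal ?_
  calc (volume A).toReal = ((volume A).toReal ^ (N + 1)) ^ ((N + 1 : ℕ) : ℝ)⁻¹ :=
        (Real.pow_rpow_inv_natCast ENNReal.toReal_nonneg N.succ_ne_zero).symm
    _ ≤ _ := by
        push_cast
        exact Real.rpow_le_rpow (by positivity) hpow (by positivity)

end Polynomial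

theorem Fin.cons_mem_Icc_zero_one {d : ℕ} {t : ℝ} {y : Fin d → ℝ} :
    (Fin.cons t y : Fin (d + 1) → ℝ) ∈ Icc 0 1 ↔ t ∈ Icc 0 1 ∧ y ∈ Icc 0 1 := by
  simp only [mem_Icc, Fin.le_cons, Fin.cons_le, Pi.zero_apply, Pi.one_apply]
  tauto

theorem volume_eq_lintegral_volume_fin_cons {d : ℕ} {S : Set (Fin (d + 1) → ℝ)}
    (hS : MeasurableSet S) : volume S = ∫⁻ y : Fin d → ℝ, volume {t : ℝ | Fin.cons t y ∈ S} := by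
  rw [← (volume_preserving_piFinSuccAbove (fun _ : Fin (d + 1) => ℝ) 0).symm.measure_preimage
    hS.nullMeasurableSet, Measure.volume_eq_prod,
    Measure.prod_apply_symm (MeasurableEquiv.measurable _ hS)]
  simp only [MeasurableEquiv.piFinSuccAbove_symm_apply, Fin.insertNthEquiv_zero]
  rfl

theorem volume_le_of_volume_fiber_le {d : ℕ} {S : Set (Fin (d + 1) → ℝ)} (hS : MeasurableSet S)
    (hSQ : S ⊆ Icc 0 1) {G : Set (Fin d → ℝ)} (hG : MeasurableSet G) {B : ℝ≥0∞}
    (hB : ∀ y ∈ Icc 0 1, y ∉ G → volume {t : ℝ | Fin.cons t y ∈ S} ≤ B) :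
    volume S ≤ volume G + B := by
  have hfiber (y : Fin d → ℝ) : volume {t : ℝ | Fin.cons t y ∈ S} ≤
      G.indicator 1 y + (Icc 0 1).indicator (fun _ => B) y := by
    have hsub : {t : ℝ | Fin.cons t y ∈ S} ⊆ {t | t ∈ Icc 0 1 ∧ y ∈ Icc 0 1} := fun t ht =>
      Fin.cons_mem_Icc_zero_one.mp (hSQ ht)
    by_cases hy : y ∈ Icc 0 1
    · by_cases hyG : y ∈ G
      · calc volume {t : ℝ | Fin.cons t y ∈ S} ≤ volume (Icc (0 : ℝ) 1) :=
              measure_mono fun t ht => (hsub ht).1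
          _ ≤ _ := by simp [hy, hyG]
      · simpa [hy, hyG] using hB y hy hyG
    · rw [eq_empty_of_forall_notMem fun t ht => hy (hsub ht).2, measure_empty]
      exact zero_le
  calc volume S = ∫⁻ y : Fin d → ℝ, volume {t : ℝ | Fin.cons t y ∈ S} :=
        volume_eq_lintegral_volume_fin_cons hS
    _ ≤ ∫⁻ y, G.indicator 1 y + (Icc 0 1).indicator (fun _ => B) y := lintegral_mono hfiber
    _ = volume G + B := by
        rw [lintegral_add_left (measurable_one.indicator hG), lintegral_indicator_one hG,
          lintegral_indicator_const measurableSet_Icc]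
        simp [Real.volume_Icc_pi]

theorem MvPolynomial.measurableSet_sublevel {ι : Type*} [Fintype ι] (R : MvPolynomial ι ℝ)
    (ε : ℝ) : MeasurableSet {x : ι → ℝ | x ∈ Icc 0 1 ∧ |eval x R| ≤ ε} :=
  (isClosed_Icc.inter (isClosed_le (continuous_eval R).abs continuous_const)).measurableSet

theorem MvPolynomial.totalDegree_coeff_finSuccEquiv_le {d : ℕ} (R : MvPolynomial (Fin (d + 1)) ℝ)
    (j : ℕ) : ((finSuccEquiv ℝ d R).coeff j).totalDegree ≤ R.totalDegree := by
  by_cases h : (finSuccEquiv ℝ d R).coeff j = 0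
  · simp [h]
  · exact le_of_add_le_left (totalDegree_coeff_finSuccEquiv_add_le R j h)

theorem MvPolynomial.natDegree_map_eval_finSuccEquiv_le {d : ℕ}
    (R : MvPolynomial (Fin (d + 1)) ℝ) (y : Fin d → ℝ) :
    ((finSuccEquiv ℝ d R).map (eval y)).natDegree ≤ R.totalDegree :=
  Polynomial.natDegree_map_le.trans
    ((natDegree_finSuccEquiv R).trans_le (degreeOf_le_totalDegree R 0))

theorem MvPolynomial.volume_fiber_sublevel_le {d N : ℕ} {R : MvPolynomial (Fin (d + 1)) ℝ}
    (hR : R.totalDegree ≤ N) {y : Fin d → ℝ} (hy : y ∈ Icc 0 1) {j : ℕ} {δ : ℝ} (hδ : 0 < δ)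
    (hyj : δ ≤ |eval y ((finSuccEquiv ℝ d R).coeff j)|) {ε : ℝ} (hε : 0 ≤ ε) :
    volume {t : ℝ | Fin.cons t y ∈ {x | x ∈ Icc 0 1 ∧ |eval x R| ≤ ε}} ≤
      ENNReal.ofReal (((N + 1) * (4 * (N + 1)) ^ N * (ε / δ)) ^ ((N : ℝ) + 1)⁻¹) := by
  have hfiber : {t : ℝ | Fin.cons t y ∈ {x | x ∈ Icc 0 1 ∧ |eval x R| ≤ ε}} =
      {t | t ∈ Icc 0 1 ∧ |((finSuccEquiv ℝ d R).map (eval y)).eval t| ≤ ε} := by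
    ext t
    simp only [mem_ofPred_eq, Fin.cons_mem_Icc_zero_one, eval_eq_eval_mv_eval']
    tauto
  rw [hfiber]
  exact Polynomial.volume_sublevel_le ((natDegree_map_eval_finSuccEquiv_le R y).trans hR) hδ
    (k := j) (by rwa [Polynomial.coeff_map]) hε

def HasSublevelBound (d N : ℕ) (σ C : ℝ) : Prop :=
  ∀ R : MvPolynomial (Fin d) ℝ, R.totalDegree ≤ N → ∀ κ : ℝ, 0 < κ → (∃ s, κ ≤ |R.coeff s|) →
    ∀ ε : ℝ, 0 < ε →
      volume {x : Fin d → ℝ | x ∈ Icc 0 1 ∧ |eval x R| ≤ ε} ≤ ENNReal.ofReal (C * (ε / κ) ^ σ)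

theorem hasSublevelBound_zero (N : ℕ) : HasSublevelBound 0 N 1 1 := by
  rintro R - κ hκ ⟨s, hs⟩ ε hε
  rw [Subsingleton.elim s 0] at hs
  rcases lt_or_ge ε κ with hεκ | hκε
  · have : {x : Fin 0 → ℝ | x ∈ Icc 0 1 ∧ |eval x R| ≤ ε} = ∅ := by
      ext x
      rw [eq_C_of_isEmpty R]
      simp only [eval_C, mem_ofPred_eq, mem_empty_iff_false, iff_false, not_and, not_le]
      exact fun _ => hεκ.trans_le hs
    simp only [this, measure_empty, zero_le]
  · refine (volume_sep_Icc_zero_one_le_one _).trans ?_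
    rw [one_mul, Real.rpow_one, ← ENNReal.ofReal_one]
    exact ENNReal.ofReal_le_ofReal ((one_le_div hκ).mpr hκε)

theorem Real.sqrt_rpow_le_rpow {r : ℝ} (hr : 0 < r) (hr1 : r ≤ 1) {a b : ℝ} (hab : b ≤ a) :
    √r ^ a ≤ r ^ (b / 2) := by
  rw [Real.sqrt_eq_rpow, ← Real.rpow_mul hr.le]
  exact Real.rpow_le_rpow_of_exponent_ge hr hr1 (by linarith)

theorem HasSublevelBound.succ {d N : ℕ} {σ C : ℝ} (h : HasSublevelBound d N σ C) (hσ : 0 ≤ σ)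
    (hC : 1 ≤ C) :
    HasSublevelBound (d + 1) N (min σ ((N : ℝ) + 1)⁻¹ / 2)
      (C + ((N + 1) * (4 * (N + 1)) ^ N) ^ ((N : ℝ) + 1)⁻¹) := by
  set ρ := ((N : ℝ) + 1)⁻¹
  set K := ((N : ℝ) + 1) * (4 * (N + 1)) ^ N
  have hK : 0 ≤ K ^ ρ := Real.rpow_nonneg (by simp only [K]; positivity) ρ
  rintro R hR κ hκ ⟨s, hs⟩ ε hε
  set r := ε / κ
  have hr : 0 < r := by positivity
  rcases lt_or_ge 1 r with hr1 | hr1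
  · refine (volume_sep_Icc_zero_one_le_one _).trans ?_
    rw [← ENNReal.ofReal_one]
    refine ENNReal.ofReal_le_ofReal (one_le_mul_of_one_le_of_one_le ?_ ?_)
    · linarith
    · exact Real.one_le_rpow hr1.le (div_nonneg (le_min hσ (by positivity)) zero_le_two)
  set q := finSuccEquiv ℝ d R
  set δ := κ * √r
  have hδ : 0 < δ := by positivity
  have hQ : κ ≤ |(q.coeff (s 0)).coeff s.tail| := by
    rwa [finSuccEquiv_coeff_coeff, Finsupp.cons_tail]
  have hG := h _ ((totalDegree_coeff_finSuccEquiv_le R _).trans hR) κ hκ ⟨_, hQ⟩ δ hδ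
  set G := {y : Fin d → ℝ | y ∈ Icc 0 1 ∧ |eval y (q.coeff (s 0))| ≤ δ}
  have hεδ : ε / δ = √r := by
    rw [show ε = κ * r by simp only [r]; field_simp]
    exact (mul_div_mul_left _ _ hκ.ne').trans Real.div_sqrt
  have hfiber : ∀ y ∈ Icc (0 : Fin d → ℝ) 1, y ∉ G →
      volume {t : ℝ | Fin.cons t y ∈ {x | x ∈ Icc 0 1 ∧ |eval x R| ≤ ε}} ≤
        ENNReal.ofReal ((K * √r) ^ ρ) := fun y hy hyG => by
    rw [← hεδ]
    exact volume_fiber_sublevel_le hR hy hδ (not_le.mp fun h => hyG ⟨hy, h⟩).le hε.le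
  have hδκ : δ / κ = √r := by simp only [δ]; field_simp
  calc volume {x : Fin (d + 1) → ℝ | x ∈ Icc 0 1 ∧ |eval x R| ≤ ε}
      ≤ volume G + ENNReal.ofReal ((K * √r) ^ ρ) :=
        volume_le_of_volume_fiber_le (measurableSet_sublevel R ε) (fun _ hx => hx.1)
          (measurableSet_sublevel _ δ) hfiber
    _ ≤ ENNReal.ofReal (C * √r ^ σ) + ENNReal.ofReal (K ^ ρ * √r ^ ρ) := by
        rw [← hδκ, Real.mul_rpow (by positivity) (by positivity)]
        gcongr
    _ ≤ ENNReal.ofReal ((C + K ^ ρ) * r ^ (min σ ρ / 2)) := by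
        rw [← ENNReal.ofReal_add (by positivity) (by positivity)]
        refine ENNReal.ofReal_le_ofReal ?_
        rw [add_mul]
        gcongr
        · exact Real.sqrt_rpow_le_rpow hr hr1 (min_le_left _ _)
        · exact Real.sqrt_rpow_le_rpow hr hr1 (min_le_right _ _)

theorem exists_hasSublevelBound (N d : ℕ) :
    ∃ σ : ℝ, 0 < σ ∧ ∃ C : ℝ, 1 ≤ C ∧ HasSublevelBound d N σ C := by
  induction d with
  | zero => exact ⟨1, one_pos, 1, le_rfl, hasSublevelBound_zero N⟩
  | succ d ih =>
    obtain ⟨σ, hσ, C, hC, h⟩ := ih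
    exact ⟨_, by positivity, _, le_add_of_le_of_nonneg hC (by positivity), h.succ hσ.le hC⟩

theorem stmt4_general (d N : ℕ) :
    ∃ σ : ℝ, 0 < σ ∧ ∃ C : ℝ, 0 < C ∧
      ∀ R : MvPolynomial (Fin d) ℝ, R.totalDegree ≤ N →
        1 ≤ ∑ k ∈ Finset.range (N + 1),
            ‖iteratedFDeriv ℝ k (fun x : Fin d → ℝ => MvPolynomial.eval x R) 0‖ →
        ∀ ε : ℝ, 0 < ε →
          volume {x : Fin d → ℝ | x ∈ Set.Icc 0 1 ∧ |MvPolynomial.eval x R| ≤ ε}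
            ≤ ENNReal.ofReal (C * ε ^ σ) := by
  obtain ⟨κ, hκ, hjet⟩ := exists_le_abs_coeff_of_one_le_jet (Fin d) N
  obtain ⟨σ, hσ, C, hC, h⟩ := exists_hasSublevelBound N d
  refine ⟨σ, hσ, C / κ ^ σ, by positivity, fun R hR hR1 ε hε => ?_⟩
  calc _ ≤ ENNReal.ofReal (C * (ε / κ) ^ σ) := h R hR κ hκ (hjet R hR hR1) ε hε
    _ = ENNReal.ofReal (C / κ ^ σ * ε ^ σ) := by
        rw [Real.div_rpow hε.le hκ.le]
        ring_nf

/-- Polynomial sublevel-set estimate: for polynomials `R` on `ℝ^d` of degree at most `N`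
with normalized jet at the origin, `|{x ∈ Q : |R(x)| ≤ ε}| ≤ C ε^σ`. -/
theorem stmt4 (d N : ℕ) (hd : 1 ≤ d) (hN : 1 ≤ N) :
    ∃ σ : ℝ, 0 < σ ∧ ∃ C : ℝ, 0 < C ∧
      ∀ R : MvPolynomial (Fin d) ℝ, R.totalDegree ≤ N →
        1 ≤ ∑ k ∈ Finset.range (N + 1),
            ‖iteratedFDeriv ℝ k (fun x : Fin d → ℝ => MvPolynomial.eval x R) 0‖ →
        ∀ ε : ℝ, 0 < ε →
          volume {x : Fin d → ℝ | x ∈ Set.Icc 0 1 ∧ |MvPolynomial.eval x R| ≤ ε}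
            ≤ ENNReal.ofReal (C * ε ^ σ) :=
  stmt4_general d N
end

section
/- Let I ⊂ ℝ be a bounded interval with center z. Define the lacunary maximal operator N_I f(x) = sup_{r ∈ 2^ℤ} |I|^{−1} ∫_I |f(x − r y)| dy. Then N_I is of weak type (1,1) with constant O(log(2 + |z| / |I|)); that is, there is an absolute constant C such that for all f ∈ L¹(ℝ) and α > 0, |{x : N_I f(x) > α}| ≤ C log(2 + |z|/|I|) α^{−1} ‖f‖_{L¹}. -/
/-!
A point `x` with `N_I f(x) > α` is the reflection point of an interval `J = x - 2ⁿ I` of length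
`2ⁿ|I|` on which `|f|` has mass at least `α |J|`. Split the scales `n` into `m ≈ log₂(2 + |z|/|I|)`
residue classes mod `m` and apply the Vitali covering lemma to the intervals of one class. If an
interval meets a selected one of larger or equal scale, either the scales coincide, and then `x`
is close to the selected reflection point, or they differ by a factor `2ᵐ ≥ 2 + |z|/L`, which
absorbs the distance `2ⁿ|z|` from `x` to its own interval, and then `x` is close to the center of
the selected interval. So each class has measure at most `4‖f‖₁/α`, and the `m` classes give the
logarithm.
-/

open MeasureTheory

/-- The lacunary maximal operator `N_I f(x) = sup_{r ∈ 2^ℤ} |I|⁻¹ ∫_I |f(x - r y)| dy`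
over the interval `I = (z - L, z + L)` of center `z` and length `2L`. -/
noncomputable def lacMax (z L : ℝ) (f : ℝ → ℝ) (x : ℝ) : ENNReal :=
  ⨆ n : ℤ, (ENNReal.ofReal (2 * L))⁻¹ *
    ∫⁻ y in Set.Ioo (z - L) (z + L), ENNReal.ofReal |f (x - (2 : ℝ) ^ n * y)|

open Set Metric ENNReal

lemma setLIntegral_Ioo_sub_mul (g : ℝ → ℝ≥0∞) (x : ℝ) {c : ℝ} (hc : 0 < c) (a b : ℝ) :
    ∫⁻ u in Ioo (x - c * b) (x - c * a), g u =
      ENNReal.ofReal c * ∫⁻ y in Ioo a b, g (x - c * y) := by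
  have himage : (fun y => x - c * y) '' Ioo a b = Ioo (x - c * b) (x - c * a) := by
    rw [← image_const_sub_Ioo, ← image_mul_left_Ioo hc, image_image]
  have hderiv : ∀ y ∈ Ioo a b, HasDerivWithinAt (fun y => x - c * y) (-c) (Ioo a b) y :=
    fun y _ => by simpa using ((hasDerivAt_id y).const_mul c).const_sub x |>.hasDerivWithinAt
  have hinj : InjOn (fun y => x - c * y) (Ioo a b) := fun y _ y' _ h => by
    simpa [hc.ne'] using h
  rw [← himage, lintegral_image_eq_lintegral_abs_deriv_mul measurableSet_Ioo hderiv hinj,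
    abs_neg, abs_of_pos hc, lintegral_const_mul' _ _ ofReal_ne_top]

lemma measure_fst_image_le_sum_modEq {X : Type*} [MeasurableSpace X] (μ : Measure X)
    (S : Set (X × ℤ)) {m : ℕ} (hm : 0 < m) :
    μ (Prod.fst '' S) ≤ ∑ r ∈ Finset.range m, μ (Prod.fst '' {p ∈ S | p.2 ≡ r [ZMOD m]}) := by
  refine (measure_mono ?_).trans (measure_biUnion_finset_le _ _)
  rintro _ ⟨p, hp, rfl⟩
  have hr : 0 ≤ p.2 % m := Int.emod_nonneg _ (by omega)
  refine mem_biUnion (x := (p.2 % m).toNat) ?_ ⟨p, ⟨hp, ?_⟩, rfl⟩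
  · have := Int.emod_lt_of_pos p.2 (by omega : (0 : ℤ) < m)
    simp only [Finset.coe_range, mem_Iio]
    omega
  · rw [Int.toNat_of_nonneg hr]
    exact (Int.mod_modEq _ _).symm

lemma exists_nat_two_pow_ge_and_le_three_mul_log {t : ℝ} (ht : 0 ≤ t) :
    ∃ m : ℕ, 0 < m ∧ 2 + 2 * t ≤ 2 ^ m ∧ (m : ℝ) ≤ 3 * Real.log (2 + t) := by
  set b := Real.logb 2 (2 + 2 * t)
  have hb : 1 ≤ b := by
    rw [Real.le_logb_iff_rpow_le one_lt_two (by linarith)]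
    simp only [Real.rpow_one]
    linarith
  refine ⟨⌈b⌉₊, Nat.ceil_pos.2 (by linarith), ?_, ?_⟩
  · calc 2 + 2 * t = (2 : ℝ) ^ b := (Real.rpow_logb two_pos (by norm_num) (by linarith)).symm
      _ ≤ (2 : ℝ) ^ (⌈b⌉₊ : ℝ) := Real.rpow_le_rpow_of_exponent_le one_le_two (Nat.le_ceil b)
      _ = 2 ^ ⌈b⌉₊ := Real.rpow_natCast _ _
  · have hlog2 := Real.log_two_gt_d9
    have hlog : 0 < Real.log (2 + t) := Real.log_pos (by linarith)
    have hbl : b * Real.log 2 = Real.log (2 + 2 * t) := by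
      simp only [b, Real.logb]
      field_simp
    have hsq : Real.log 2 + Real.log (2 + 2 * t) ≤ 2 * Real.log (2 + t) := by
      rw [← Real.log_mul two_ne_zero (by linarith), two_mul (Real.log _),
        ← Real.log_mul (by linarith) (by linarith)]
      exact Real.log_le_log (by linarith) (by nlinarith)
    have hceil := Nat.ceil_lt_add_one (by linarith : 0 ≤ b)
    nlinarith

/-- The interval `x - 2ⁿ I`, for `I = (z - L, z + L)`. -/
def lacInterval (z L : ℝ) (n : ℤ) (x : ℝ) : Set ℝ :=
  Ioo (x - 2 ^ n * (z + L)) (x - 2 ^ n * (z - L))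

lemma mem_lacInterval_iff {z L w x : ℝ} {n : ℤ} :
    w ∈ lacInterval z L n x ↔ |x - 2 ^ n * z - w| < 2 ^ n * L := by
  rw [lacInterval, mem_Ioo, abs_sub_lt_iff]
  constructor <;> rintro ⟨h₁, h₂⟩ <;> constructor <;> linarith

lemma setLIntegral_lacInterval {z L : ℝ} (hL : 0 < L) (g : ℝ → ℝ≥0∞) (n : ℤ) (x : ℝ) :
    ∫⁻ u in lacInterval z L n x, g u = ENNReal.ofReal (2 ^ n * (2 * L)) *
      ((ENNReal.ofReal (2 * L))⁻¹ * ∫⁻ y in Ioo (z - L) (z + L), g (x - 2 ^ n * y)) := by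
  have h2L : ENNReal.ofReal (2 * L) ≠ 0 := by simp [hL]
  rw [lacInterval, setLIntegral_Ioo_sub_mul g x (zpow_pos two_pos n),
    ENNReal.ofReal_mul (zpow_pos two_pos n).le, mul_assoc,
    ENNReal.mul_inv_cancel_left h2L ofReal_ne_top]

lemma exists_mul_le_setLIntegral_of_lt_lacMax {z L : ℝ} (hL : 0 < L) {f : ℝ → ℝ} {x : ℝ}
    {α : ℝ≥0∞} (h : α < lacMax z L f x) :
    ∃ n : ℤ, α * ENNReal.ofReal (2 ^ n * (2 * L)) ≤
      ∫⁻ u in lacInterval z L n x, ENNReal.ofReal |f u| := by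
  obtain ⟨n, hn⟩ := lt_iSup_iff.mp h
  refine ⟨n, ?_⟩
  rw [setLIntegral_lacInterval hL, mul_comm]
  gcongr

lemma abs_sub_le_of_mem_lacInterval {z L w x y : ℝ} {n : ℤ} (hx : w ∈ lacInterval z L n x)
    (hy : w ∈ lacInterval z L n y) : |x - y| ≤ 2 ^ n * (2 * L) := by
  rw [mem_lacInterval_iff] at hx hy
  calc |x - y| = |(x - 2 ^ n * z - w) - (y - 2 ^ n * z - w)| := by ring_nf
    _ ≤ |x - 2 ^ n * z - w| + |y - 2 ^ n * z - w| := abs_sub _ _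
    _ ≤ 2 ^ n * (2 * L) := by linarith

lemma abs_sub_le_of_mem_lacInterval_of_add_le {z L w x y : ℝ} {n K : ℤ} {m : ℕ} (hL : 0 < L)
    (hzm : |z| + 2 * L ≤ 2 ^ m * L) (hnK : n + m ≤ K) (hx : w ∈ lacInterval z L n x)
    (hy : w ∈ lacInterval z L K y) : |x - (y - 2 ^ K * z)| ≤ 2 ^ K * (2 * L) := by
  rw [mem_lacInterval_iff] at hx hy
  have hn : (0 : ℝ) < 2 ^ n := zpow_pos two_pos n
  have hscale : 2 ^ n * (|z| + L) ≤ 2 ^ K * L :=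
    calc 2 ^ n * (|z| + L) ≤ 2 ^ n * (2 ^ m * L) := by gcongr; linarith
      _ = 2 ^ (n + m) * L := by rw [zpow_add₀ two_ne_zero, zpow_natCast, mul_assoc]
      _ ≤ 2 ^ K * L := by gcongr; norm_num
  have hz : |2 ^ n * z| ≤ 2 ^ n * |z| := by rw [abs_mul, abs_of_pos hn]
  rw [abs_lt] at hx hy
  rw [abs_le] at hz ⊢
  constructor <;> linarith

def lacEnlargement (z L : ℝ) (K : ℤ) (y : ℝ) : Set ℝ :=
  closedBall y (2 ^ K * (2 * L)) ∪ closedBall (y - 2 ^ K * z) (2 ^ K * (2 * L))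

lemma volume_lacEnlargement_le (z L : ℝ) (K : ℤ) (y : ℝ) :
    volume (lacEnlargement z L K y) ≤ 4 * ENNReal.ofReal (2 ^ K * (2 * L)) :=
  calc volume (lacEnlargement z L K y)
      ≤ volume (closedBall y (2 ^ K * (2 * L))) +
          volume (closedBall (y - 2 ^ K * z) (2 ^ K * (2 * L))) := measure_union_le _ _
    _ = 4 * ENNReal.ofReal (2 ^ K * (2 * L)) := by
        rw [Real.volume_closedBall, Real.volume_closedBall, ENNReal.ofReal_mul zero_le_two,
          ENNReal.ofReal_ofNat]
        ring

lemma mem_lacEnlargement_of_mem_lacInterval {z L w x y : ℝ} {n K : ℤ} {m : ℕ} (hL : 0 < L)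
    (hzm : |z| + 2 * L ≤ 2 ^ m * L) (hnK : n ≤ K) (hmod : n ≡ K [ZMOD m])
    (hx : w ∈ lacInterval z L n x) (hy : w ∈ lacInterval z L K y) :
    x ∈ lacEnlargement z L K y := by
  rcases hnK.eq_or_lt with rfl | hlt
  · exact Or.inl (abs_sub_le_of_mem_lacInterval hx hy)
  · have hsep : n + m ≤ K := by
      have := Int.le_of_dvd (sub_pos.2 hlt) hmod.dvd
      omega
    exact Or.inr (abs_sub_le_of_mem_lacInterval_of_add_le hL hzm hsep hx hy)

lemma exists_disjoint_lacInterval_covering {z L : ℝ} {m : ℕ} (hL : 0 < L)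
    (hzm : |z| + 2 * L ≤ 2 ^ m * L) {S : Set (ℝ × ℤ)} {r : ℤ} (hSr : ∀ p ∈ S, p.2 ≡ r [ZMOD m])
    {R : ℝ} (hR : ∀ p ∈ S, 2 ^ p.2 * (2 * L) ≤ R) :
    ∃ u ⊆ S, u.Countable ∧ u.PairwiseDisjoint (fun p => lacInterval z L p.2 p.1) ∧
      Prod.fst '' S ⊆ ⋃ p ∈ u, lacEnlargement z L p.2 p.1 := by
  have hne (p : ℝ × ℤ) : (lacInterval z L p.2 p.1).Nonempty :=
    nonempty_Ioo.2 (by nlinarith [zpow_pos (two_pos : (0 : ℝ) < 2) p.2])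
  obtain ⟨u, huS, hdisj, hcov⟩ := Vitali.exists_disjoint_subfamily_covering_enlargement
    (fun p => lacInterval z L p.2 p.1) S (fun p => 2 ^ p.2 * (2 * L)) (3 / 2) (by norm_num)
    (fun p _ => by positivity) R hR (fun p _ => hne p)
  refine ⟨u, huS, hdisj.countable_of_isOpen (fun _ _ => isOpen_Ioo) (fun p _ => hne p), hdisj, ?_⟩
  rintro _ ⟨p, hp, rfl⟩
  obtain ⟨q, hqu, ⟨w, hwp, hwq⟩, hpq⟩ := hcov p hp
  -- Vitali's factor `3 / 2 < 2` and lacunarity give `p.2 ≤ q.2`.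
  have hle : p.2 ≤ q.2 := by
    have hlt : (2 : ℝ) ^ p.2 < 2 ^ (q.2 + 1) := by
      rw [zpow_add_one₀ two_ne_zero]
      nlinarith [zpow_pos (two_pos : (0 : ℝ) < 2) q.2]
    have := (zpow_lt_zpow_iff_right₀ (one_lt_two : (1 : ℝ) < 2)).1 hlt
    omega
  exact mem_biUnion hqu (mem_lacEnlargement_of_mem_lacInterval hL hzm hle
    ((hSr p hp).trans (hSr q (huS hqu)).symm) hwp hwq)

lemma volume_fst_image_mul_le_of_modEq {z L : ℝ} {m : ℕ} (hL : 0 < L)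
    (hzm : |z| + 2 * L ≤ 2 ^ m * L) {g : ℝ → ℝ≥0∞} (hg : ∫⁻ u, g u ≠ ∞) {α : ℝ≥0∞}
    (hα : α ≠ 0) {S : Set (ℝ × ℤ)} {r : ℤ} (hSr : ∀ p ∈ S, p.2 ≡ r [ZMOD m])
    (hSg : ∀ p ∈ S, α * ENNReal.ofReal (2 ^ p.2 * (2 * L)) ≤
      ∫⁻ u in lacInterval z L p.2 p.1, g u) :
    volume (Prod.fst '' S) * α ≤ 4 * ∫⁻ u, g u := by
  have hR : ∀ p ∈ S, 2 ^ p.2 * (2 * L) ≤ ((∫⁻ u, g u) / α).toReal := by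
    intro p hp
    rw [← ofReal_le_iff_le_toReal (div_ne_top hg hα),
      ENNReal.le_div_iff_mul_le (Or.inl hα) (Or.inr hg), mul_comm]
    exact (hSg p hp).trans (setLIntegral_le_lintegral _ _)
  obtain ⟨u, huS, hu, hdisj, hcover⟩ := exists_disjoint_lacInterval_covering hL hzm hSr hR
  have : Countable u := hu.to_subtype
  calc volume (Prod.fst '' S) * α
      ≤ (∑' p : u, volume (lacEnlargement z L p.1.2 p.1.1)) * α := by
        gcongr
        exact (measure_mono hcover).trans (measure_biUnion_le _ hu _)
    _ ≤ (∑' p : u, 4 * ENNReal.ofReal (2 ^ p.1.2 * (2 * L))) * α := by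
        gcongr with p
        exact volume_lacEnlargement_le _ _ _ _
    _ = 4 * ∑' p : u, α * ENNReal.ofReal (2 ^ p.1.2 * (2 * L)) := by
        rw [ENNReal.tsum_mul_left, ENNReal.tsum_mul_left]
        ring
    _ ≤ 4 * ∑' p : u, ∫⁻ v in lacInterval z L p.1.2 p.1.1, g v := by
        gcongr with p
        exact hSg _ (huS p.2)
    _ = 4 * ∫⁻ v in ⋃ p : u, lacInterval z L p.1.2 p.1.1, g v := by
        rw [lintegral_iUnion (fun _ => by exact measurableSet_Ioo) hdisj.subtype]
    _ ≤ 4 * ∫⁻ v, g v := by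
        gcongr
        exact Measure.restrict_le_self

/-- Lemma 3.1, weak type `(1,1)` part: `N_I` is of weak type `(1,1)` with constant
`O(log(2 + |z|/|I|))`. -/
theorem stmt6 :
    ∃ C : ℝ, 0 < C ∧ ∀ z L : ℝ, 0 < L → ∀ f : ℝ → ℝ, Integrable f →
      ∀ α : ℝ, 0 < α →
        volume {x : ℝ | ENNReal.ofReal α < lacMax z L f x} * ENNReal.ofReal α
          ≤ ENNReal.ofReal (C * Real.log (2 + |z| / (2 * L))) *
              ∫⁻ y, ENNReal.ofReal |f y| := by
  refine ⟨12, by norm_num, fun z L hL f hf α hα => ?_⟩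
  obtain ⟨m, hm, hm_pow, hm_log⟩ := exists_nat_two_pow_ge_and_le_three_mul_log (by positivity : 0 ≤ |z| / (2 * L))
  have hzm : |z| + 2 * L ≤ 2 ^ m * L := by
    have : 2 * (|z| / (2 * L)) * L = |z| := by field_simp
    nlinarith
  have hf_fin : ∫⁻ y, ENNReal.ofReal |f y| ≠ ∞ := by
    simpa only [Real.enorm_eq_ofReal_abs] using hf.2.ne
  set S := {p : ℝ × ℤ | ENNReal.ofReal α * ENNReal.ofReal (2 ^ p.2 * (2 * L)) ≤
    ∫⁻ u in lacInterval z L p.2 p.1, ENNReal.ofReal |f u|}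
  have hlevel : {x : ℝ | ENNReal.ofReal α < lacMax z L f x} ⊆ Prod.fst '' S := fun x hx =>
    have ⟨n, hn⟩ := exists_mul_le_setLIntegral_of_lt_lacMax hL hx
    ⟨(x, n), hn, rfl⟩
  calc volume {x : ℝ | ENNReal.ofReal α < lacMax z L f x} * ENNReal.ofReal α
      ≤ (∑ r ∈ Finset.range m, volume (Prod.fst '' {p ∈ S | p.2 ≡ r [ZMOD m]})) *
          ENNReal.ofReal α := by
        gcongr
        exact (measure_mono hlevel).trans (measure_fst_image_le_sum_modEq _ S hm)
    _ ≤ ∑ r ∈ Finset.range m, 4 * ∫⁻ y, ENNReal.ofReal |f y| := by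
        rw [Finset.sum_mul]
        exact Finset.sum_le_sum fun r _ => volume_fst_image_mul_le_of_modEq hL hzm hf_fin
          (ENNReal.ofReal_pos.2 hα).ne' (fun _ ↦ And.right) (fun _ ↦ And.left)
    _ = ENNReal.ofReal (4 * m) * ∫⁻ y, ENNReal.ofReal |f y| := by
        rw [Finset.sum_const, Finset.card_range, nsmul_eq_mul, ENNReal.ofReal_mul zero_le_four]
        simp only [ENNReal.ofReal_ofNat, ENNReal.ofReal_natCast]
        ring
    _ ≤ ENNReal.ofReal (12 * Real.log (2 + |z| / (2 * L))) * ∫⁻ y, ENNReal.ofReal |f y| := by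
        gcongr ?_ * _
        exact ENNReal.ofReal_le_ofReal (by linarith)
end

section
/- Let (a_{j,k})_{k∈ℤ} for j = 1, 2, 3 be sequences of complex numbers, and let K ⊂ ℤ³ be a set of triples k = (k₁,k₂,k₃) with the property that for each j ∈ {1,2,3} and each fixed value of k_j, the number of (k_{j'}, k_{j''}) (the other two coordinates) with k ∈ K is at most L. Then Σ_{k∈K} Π_{j=1}^3 |a_{j,k_j}| ≤ L · Π_{j=1}^{3} [(Σ_k |a_{j,k}|²)^{1/2}]^{2/3} [sup_k |a_{j,k}|]^{1/3}. -/
open Finset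

private lemma slice_bound (L : ℕ) (K : Finset (ℤ × ℤ × ℤ)) (p : ℤ × ℤ × ℤ → ℤ)
    (hK : ∀ v, (K.filter fun k => p k = v).card ≤ L)
    (f : ℤ → ℝ) (hf0 : ∀ v, 0 ≤ f v) (hf : Summable f) :
    ∑ k ∈ K, f (p k) ≤ (L : ℝ) * ∑' v, f v := by
  have h1 : ∑ k ∈ K, f (p k)
      = ∑ v ∈ K.image p, ∑ k ∈ K.filter (fun k => p k = v), f (p k) :=
    (Finset.sum_fiberwise_of_maps_to (fun x hx => Finset.mem_image_of_mem p hx) _).symm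
  rw [h1]
  calc ∑ v ∈ K.image p, ∑ k ∈ K.filter (fun k => p k = v), f (p k)
      ≤ ∑ v ∈ K.image p, (L : ℝ) * f v := by
        apply Finset.sum_le_sum
        intro v _
        have h2 : ∑ k ∈ K.filter (fun k => p k = v), f (p k)
            = ((K.filter (fun k => p k = v)).card : ℝ) * f v := by
          rw [Finset.sum_congr rfl (fun k hk => by rw [(Finset.mem_filter.mp hk).2]),
            Finset.sum_const, nsmul_eq_mul]
        rw [h2]
        exact mul_le_mul_of_nonneg_right (by exact_mod_cast hK v) (hf0 v)
    _ = (L : ℝ) * ∑ v ∈ K.image p, f v := by rw [Finset.mul_sum]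
    _ ≤ (L : ℝ) * ∑' v, f v := by
        refine mul_le_mul_of_nonneg_left ?_ (Nat.cast_nonneg L)
        exact Summable.sum_le_tsum _ (fun v _ => hf0 v) hf

private lemma tri_sq (K : Finset (ℤ × ℤ × ℤ)) (c d e : ℤ → ℝ) (p q r : ℤ × ℤ × ℤ → ℤ)
    (hc : ∀ v, 0 ≤ c v) (hd : ∀ v, 0 ≤ d v) (he : ∀ v, 0 ≤ e v)
    (M : ℝ) (hM0 : 0 ≤ M) (hM : ∀ v, c v ≤ M)
    (A B : ℝ) (hA : ∑ k ∈ K, d (q k) ^ 2 ≤ A) (hB : ∑ k ∈ K, e (r k) ^ 2 ≤ B) :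
    (∑ k ∈ K, c (p k) * d (q k) * e (r k)) ^ 2 ≤ M ^ 2 * (A * B) := by
  have hT0 : 0 ≤ ∑ k ∈ K, c (p k) * d (q k) * e (r k) :=
    Finset.sum_nonneg fun k _ => mul_nonneg (mul_nonneg (hc _) (hd _)) (he _)
  have h1 : ∑ k ∈ K, c (p k) * d (q k) * e (r k) ≤ M * ∑ k ∈ K, d (q k) * e (r k) := by
    rw [Finset.mul_sum]
    refine Finset.sum_le_sum fun k _ => ?_
    rw [mul_assoc]
    exact mul_le_mul_of_nonneg_right (hM (p k)) (mul_nonneg (hd _) (he _))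
  have hS0 : 0 ≤ ∑ k ∈ K, d (q k) * e (r k) :=
    Finset.sum_nonneg fun k _ => mul_nonneg (hd _) (he _)
  calc (∑ k ∈ K, c (p k) * d (q k) * e (r k)) ^ 2
      ≤ (M * ∑ k ∈ K, d (q k) * e (r k)) ^ 2 := pow_le_pow_left₀ hT0 h1 2
    _ = M ^ 2 * (∑ k ∈ K, d (q k) * e (r k)) ^ 2 := by ring
    _ ≤ M ^ 2 * ((∑ k ∈ K, d (q k) ^ 2) * ∑ k ∈ K, e (r k) ^ 2) := by
        refine mul_le_mul_of_nonneg_left ?_ (sq_nonneg M)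
        exact Finset.sum_mul_sq_le_sq_mul_sq K _ _
    _ ≤ M ^ 2 * (A * B) := by
        refine mul_le_mul_of_nonneg_left ?_ (sq_nonneg M)
        have hd0 : 0 ≤ ∑ k ∈ K, d (q k) ^ 2 := Finset.sum_nonneg fun k _ => sq_nonneg _
        have he0 : 0 ≤ ∑ k ∈ K, e (r k) ^ 2 := Finset.sum_nonneg fun k _ => sq_nonneg _
        exact mul_le_mul hA hB he0 (hd0.trans hA)

/-- Combinatorial Cauchy–Schwarz estimate: if each coordinate slice of the frequency
set `K ⊂ ℤ³` has cardinality at most `L`, then the trilinear sum of coefficient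
products is bounded by `L` times the geometric mean of the three mixed bounds. -/
theorem stmt17 (L : ℕ) (K : Finset (ℤ × ℤ × ℤ)) (a₁ a₂ a₃ : ℤ → ℂ)
    (h₁ : Summable fun k => ‖a₁ k‖ ^ 2)
    (h₂ : Summable fun k => ‖a₂ k‖ ^ 2)
    (h₃ : Summable fun k => ‖a₃ k‖ ^ 2)
    (hK₁ : ∀ v : ℤ, (K.filter fun k => k.1 = v).card ≤ L)
    (hK₂ : ∀ v : ℤ, (K.filter fun k => k.2.1 = v).card ≤ L)
    (hK₃ : ∀ v : ℤ, (K.filter fun k => k.2.2 = v).card ≤ L) :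
    ∑ k ∈ K, ‖a₁ k.1‖ * ‖a₂ k.2.1‖ * ‖a₃ k.2.2‖
      ≤ (L : ℝ) *
        ((∑' k : ℤ, ‖a₁ k‖ ^ 2) ^ ((1 : ℝ) / 3) * (⨆ k : ℤ, ‖a₁ k‖) ^ ((1 : ℝ) / 3)) *
        ((∑' k : ℤ, ‖a₂ k‖ ^ 2) ^ ((1 : ℝ) / 3) * (⨆ k : ℤ, ‖a₂ k‖) ^ ((1 : ℝ) / 3)) *
        ((∑' k : ℤ, ‖a₃ k‖ ^ 2) ^ ((1 : ℝ) / 3) * (⨆ k : ℤ, ‖a₃ k‖) ^ ((1 : ℝ) / 3)) := by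
  set S₁ : ℝ := ∑' k : ℤ, ‖a₁ k‖ ^ 2 with hS₁def
  set S₂ : ℝ := ∑' k : ℤ, ‖a₂ k‖ ^ 2 with hS₂def
  set S₃ : ℝ := ∑' k : ℤ, ‖a₃ k‖ ^ 2 with hS₃def
  set M₁ : ℝ := ⨆ k : ℤ, ‖a₁ k‖ with hM₁def
  set M₂ : ℝ := ⨆ k : ℤ, ‖a₂ k‖ with hM₂def
  set M₃ : ℝ := ⨆ k : ℤ, ‖a₃ k‖ with hM₃def
  set T : ℝ := ∑ k ∈ K, ‖a₁ k.1‖ * ‖a₂ k.2.1‖ * ‖a₃ k.2.2‖ with hTdef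
  -- nonnegativity of tsums
  have hS₁0 : 0 ≤ S₁ := tsum_nonneg fun k => sq_nonneg _
  have hS₂0 : 0 ≤ S₂ := tsum_nonneg fun k => sq_nonneg _
  have hS₃0 : 0 ≤ S₃ := tsum_nonneg fun k => sq_nonneg _
  -- bounded above: each ‖a k‖ ≤ √S
  have bdd : ∀ (a : ℤ → ℂ), Summable (fun k => ‖a k‖ ^ 2) →
      BddAbove (Set.range fun k => ‖a k‖) := by
    intro a ha
    refine ⟨Real.sqrt (∑' k : ℤ, ‖a k‖ ^ 2), ?_⟩
    rintro x ⟨k, rfl⟩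
    have h := Summable.le_tsum ha k (fun _ _ => sq_nonneg _)
    calc ‖a k‖ = Real.sqrt (‖a k‖ ^ 2) := (Real.sqrt_sq (norm_nonneg _)).symm
      _ ≤ Real.sqrt (∑' k : ℤ, ‖a k‖ ^ 2) := Real.sqrt_le_sqrt h
  have hb₁ := bdd a₁ h₁
  have hb₂ := bdd a₂ h₂
  have hb₃ := bdd a₃ h₃
  have hM₁ : ∀ v, ‖a₁ v‖ ≤ M₁ := fun v => le_ciSup hb₁ v
  have hM₂ : ∀ v, ‖a₂ v‖ ≤ M₂ := fun v => le_ciSup hb₂ v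
  have hM₃ : ∀ v, ‖a₃ v‖ ≤ M₃ := fun v => le_ciSup hb₃ v
  have hM₁0 : 0 ≤ M₁ := (norm_nonneg (a₁ 0)).trans (hM₁ 0)
  have hM₂0 : 0 ≤ M₂ := (norm_nonneg (a₂ 0)).trans (hM₂ 0)
  have hM₃0 : 0 ≤ M₃ := (norm_nonneg (a₃ 0)).trans (hM₃ 0)
  -- slice bounds
  have sl₁ : ∑ k ∈ K, ‖a₁ k.1‖ ^ 2 ≤ (L : ℝ) * S₁ :=
    slice_bound L K (fun k => k.1) hK₁ _ (fun v => sq_nonneg _) h₁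
  have sl₂ : ∑ k ∈ K, ‖a₂ k.2.1‖ ^ 2 ≤ (L : ℝ) * S₂ :=
    slice_bound L K (fun k => k.2.1) hK₂ _ (fun v => sq_nonneg _) h₂
  have sl₃ : ∑ k ∈ K, ‖a₃ k.2.2‖ ^ 2 ≤ (L : ℝ) * S₃ :=
    slice_bound L K (fun k => k.2.2) hK₃ _ (fun v => sq_nonneg _) h₃
  have hT0 : 0 ≤ T :=
    Finset.sum_nonneg fun k _ => mul_nonneg (mul_nonneg (norm_nonneg _) (norm_nonneg _))
      (norm_nonneg _)
  -- three square bounds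
  have sq₁ : T ^ 2 ≤ M₁ ^ 2 * ((L : ℝ) * S₂ * ((L : ℝ) * S₃)) := by
    have := tri_sq K (fun v => ‖a₁ v‖) (fun v => ‖a₂ v‖) (fun v => ‖a₃ v‖)
      (fun k => k.1) (fun k => k.2.1) (fun k => k.2.2)
      (fun v => norm_nonneg _) (fun v => norm_nonneg _) (fun v => norm_nonneg _)
      M₁ hM₁0 hM₁ _ _ sl₂ sl₃
    exact this
  have sq₂ : T ^ 2 ≤ M₂ ^ 2 * ((L : ℝ) * S₁ * ((L : ℝ) * S₃)) := by
    have h := tri_sq K (fun v => ‖a₂ v‖) (fun v => ‖a₁ v‖) (fun v => ‖a₃ v‖)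
      (fun k => k.2.1) (fun k => k.1) (fun k => k.2.2)
      (fun v => norm_nonneg _) (fun v => norm_nonneg _) (fun v => norm_nonneg _)
      M₂ hM₂0 hM₂ _ _ sl₁ sl₃
    have e : ∑ k ∈ K, ‖a₂ k.2.1‖ * ‖a₁ k.1‖ * ‖a₃ k.2.2‖ = T := by
      rw [hTdef]; exact Finset.sum_congr rfl fun k _ => by ring
    rwa [e] at h
  have sq₃ : T ^ 2 ≤ M₃ ^ 2 * ((L : ℝ) * S₁ * ((L : ℝ) * S₂)) := by
    have h := tri_sq K (fun v => ‖a₃ v‖) (fun v => ‖a₁ v‖) (fun v => ‖a₂ v‖)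
      (fun k => k.2.2) (fun k => k.1) (fun k => k.2.1)
      (fun v => norm_nonneg _) (fun v => norm_nonneg _) (fun v => norm_nonneg _)
      M₃ hM₃0 hM₃ _ _ sl₁ sl₂
    have e : ∑ k ∈ K, ‖a₃ k.2.2‖ * ‖a₁ k.1‖ * ‖a₂ k.2.1‖ = T := by
      rw [hTdef]; exact Finset.sum_congr rfl fun k _ => by ring
    rwa [e] at h
  -- combine: T^6 ≤ R^2 with R = L^3 * (M₁M₂M₃) * (S₁S₂S₃)
  set R : ℝ := (L : ℝ) ^ 3 * (M₁ * M₂ * M₃) * (S₁ * S₂ * S₃) with hRdef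
  have hR0 : 0 ≤ R := by positivity
  have hT2 : 0 ≤ T ^ 2 := sq_nonneg T
  have h6 : T ^ 6 ≤ R ^ 2 := by
    have h12 : T ^ 2 * T ^ 2 ≤ (M₁ ^ 2 * ((L : ℝ) * S₂ * ((L : ℝ) * S₃))) *
        (M₂ ^ 2 * ((L : ℝ) * S₁ * ((L : ℝ) * S₃))) :=
      mul_le_mul sq₁ sq₂ hT2 (by positivity)
    have h123 : T ^ 2 * T ^ 2 * T ^ 2 ≤ (M₁ ^ 2 * ((L : ℝ) * S₂ * ((L : ℝ) * S₃))) *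
        (M₂ ^ 2 * ((L : ℝ) * S₁ * ((L : ℝ) * S₃))) *
        (M₃ ^ 2 * ((L : ℝ) * S₁ * ((L : ℝ) * S₂))) :=
      mul_le_mul h12 sq₃ hT2 (by positivity)
    calc T ^ 6 = T ^ 2 * T ^ 2 * T ^ 2 := by ring
      _ ≤ _ := h123
      _ = R ^ 2 := by rw [hRdef]; ring
  have hT3 : T ^ 3 ≤ R := by
    have h := Real.sqrt_le_sqrt h6
    rwa [show T ^ 6 = (T ^ 3) ^ 2 by ring, Real.sqrt_sq (by positivity),
      Real.sqrt_sq hR0] at h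
  have hTR : T ≤ R ^ ((1 : ℝ) / 3) := by
    have hT' : T = (T ^ 3) ^ ((1 : ℝ) / 3) := by
      rw [← Real.rpow_natCast T 3, ← Real.rpow_mul hT0]
      norm_num
    rw [hT']
    exact Real.rpow_le_rpow (by positivity) hT3 (by norm_num)
  refine hTR.trans (le_of_eq ?_)
  rw [hRdef]
  rw [Real.mul_rpow (by positivity) (by positivity),
    Real.mul_rpow (by positivity) (by positivity),
    Real.mul_rpow (by positivity) hM₃0, Real.mul_rpow hM₁0 hM₂0,
    Real.mul_rpow (by positivity) hS₃0, Real.mul_rpow hS₁0 hS₂0]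
  have hL3 : ((L : ℝ) ^ 3) ^ ((1 : ℝ) / 3) = (L : ℝ) := by
    rw [← Real.rpow_natCast (L : ℝ) 3, ← Real.rpow_mul (Nat.cast_nonneg L)]
    norm_num
  rw [hL3]
  ring
end
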